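/- DFMRF is a 2-approximation under 1-nearest-neighbor dependency: for any finite point set v_n ⊂ ℝ² in general position, the energy of the DFMRF policy satisfies E(DFMRF(v_n)) ≤ 2 E(π*(v_n)), where π* is the minimum-energy lossless fusion policy. This follows from: (a) the sum of ν-power-weighted edges of the 1-nearest-neighbor graph on v_n is at most the sum of ν-power-weighted edges of the Euclidean MST on v_n, and (b) the MST energy lower-bounds the optimal policy energy. -/

import Mathlib

open scoped Classical

noncomputable def sym2Dist {ι : Type*} (p : ι → EuclideanSpace ℝ (Fin 2)) (ν : ℝ) :
    Sym2 ι → ℝ :=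
  Sym2.lift ⟨fun a b => dist (p a) (p b) ^ ν, fun a b => by simp [dist_comm]⟩

noncomputable def graphEnergy {ι : Type*} [Fintype ι]
    (p : ι → EuclideanSpace ℝ (Fin 2)) (ν : ℝ) (G : SimpleGraph ι) : ℝ :=
  ∑ e ∈ Finset.univ.filter (fun e : Sym2 ι => e ∈ G.edgeSet), sym2Dist p ν e

/-- The Euclidean 1-nearest-neighbor graph: an edge between `i` and `j` whenever `j` is the
nearest neighbor of `i` or vice versa. -/
def nng {ι : Type*} (p : ι → EuclideanSpace ℝ (Fin 2)) : SimpleGraph ι :=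
  SimpleGraph.fromRel (fun i j =>
    ∀ l : ι, l ≠ i → dist (p i) (p j) ≤ dist (p i) (p l))

def policyGraph {ι : Type*} (D : Multiset (ι × ι)) : SimpleGraph ι :=
  SimpleGraph.fromRel (fun i j => (i, j) ∈ D)

noncomputable def policyCost {ι : Type*} (p : ι → EuclideanSpace ℝ (Fin 2)) (ν : ℝ)
    (D : Multiset (ι × ι)) : ℝ :=
  (D.map (fun e => dist (p e.1) (p e.2) ^ ν)).sum

/-- Minimum energy over all lossless fusion policies, i.e. over all multisets of directed
transmissions whose undirected support graph is connected. -/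
noncomputable def optEnergy {ι : Type*} (p : ι → EuclideanSpace ℝ (Fin 2)) (ν : ℝ) : ℝ :=
  sInf {c : ℝ | ∃ D : Multiset (ι × ι), (policyGraph D).Connected ∧ c = policyCost p ν D}

/-!
Every lossless fusion policy has a connected support graph, which contains a spanning tree, so
its energy is at least that of a minimum spanning tree `T`. By general position and `ν > 0`,
the nearest neighbor `j` of `i` is strictly the cheapest edge at `i`; if `s(i, j)` were not in
`T`, swapping it for the first edge `s(i, x)` of the tree path from `i` to `j` would give a
connected graph of smaller energy (cut property). Hence the 1-NNG is a subgraph of `T`, and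
both DFMRF terms are bounded by the optimal energy.
-/

open SimpleGraph

theorem Multiset.sum_toFinset_le_sum_map {α : Type*} [DecidableEq α] (s : Multiset α)
    {f : α → ℝ} (hf : ∀ a ∈ s, 0 ≤ f a) : ∑ a ∈ s.toFinset, f a ≤ (s.map f).sum := by
  obtain ⟨t, ht⟩ := Multiset.le_iff_exists_add.mp s.dedup_le
  have ht_nonneg : 0 ≤ (t.map f).sum :=
    Multiset.sum_nonneg fun x hx => by
      obtain ⟨a, ha, rfl⟩ := Multiset.mem_map.mp hx
      exact hf a (ht ▸ Multiset.mem_add.mpr (Or.inr ha))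
  calc ∑ a ∈ s.toFinset, f a = (s.dedup.map f).sum := rfl
    _ ≤ (s.dedup.map f).sum + (t.map f).sum := le_add_of_nonneg_right ht_nonneg
    _ = (s.map f).sum := by rw [← Multiset.sum_add, ← Multiset.map_add, ← ht]

section Energy

variable {ι : Type} (p : ι → EuclideanSpace ℝ (Fin 2)) (ν : ℝ)

lemma sym2Dist_nonneg (e : Sym2 ι) : 0 ≤ sym2Dist p ν e := by
  induction e using Sym2.ind with
  | _ a b => exact Real.rpow_nonneg dist_nonneg ν

variable [Fintype ι]

lemma graphEnergy_eq_sum_edgeFinset (G : SimpleGraph ι) :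
    graphEnergy p ν G = ∑ e ∈ G.edgeFinset, sym2Dist p ν e :=
  Finset.sum_congr (by ext; simp) fun _ _ => rfl

lemma graphEnergy_mono {G H : SimpleGraph ι} (h : G ≤ H) :
    graphEnergy p ν G ≤ graphEnergy p ν H := by
  rw [graphEnergy_eq_sum_edgeFinset, graphEnergy_eq_sum_edgeFinset]
  exact Finset.sum_le_sum_of_subset_of_nonneg (edgeFinset_subset_edgeFinset.mpr h)
    fun e _ _ => sym2Dist_nonneg p ν e

lemma graphEnergy_sup_edge_deleteEdges {G : SimpleGraph ι} {i j a b : ι} (hij : i ≠ j)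
    (hnij : ¬G.Adj i j) (hab : G.Adj a b) :
    graphEnergy p ν ((G ⊔ edge i j).deleteEdges {s(a, b)}) =
      graphEnergy p ν G + sym2Dist p ν s(i, j) - sym2Dist p ν s(a, b) := by
  have hmem : s(a, b) ∈ (G ⊔ edge i j).edgeFinset := by simp [hab]
  rw [graphEnergy_eq_sum_edgeFinset, graphEnergy_eq_sum_edgeFinset,
    ← Finset.coe_singleton, edgeFinset_deleteEdges, Finset.sdiff_singleton_eq_erase,
    Finset.sum_erase_eq_sub hmem, edgeFinset_sup_edge (G := G) hnij hij, Finset.sum_cons,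
    add_comm]

lemma graphEnergy_policyGraph_le_policyCost (D : Multiset (ι × ι)) :
    graphEnergy p ν (policyGraph D) ≤ policyCost p ν D := by
  have hsub : (policyGraph D).edgeFinset ⊆ (D.map (Function.uncurry Sym2.mk)).toFinset := by
    intro e he
    induction e using Sym2.ind with
    | _ a b =>
      obtain ⟨-, hab | hba⟩ := (mem_edgeFinset.mp he : (policyGraph D).Adj a b)
      · exact Multiset.mem_toFinset.mpr (Multiset.mem_map_of_mem _ hab)
      · rw [Sym2.eq_swap]
        exact Multiset.mem_toFinset.mpr (Multiset.mem_map_of_mem _ hba)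
  calc graphEnergy p ν (policyGraph D)
      = ∑ e ∈ (policyGraph D).edgeFinset, sym2Dist p ν e := graphEnergy_eq_sum_edgeFinset p ν _
    _ ≤ ∑ e ∈ (D.map (Function.uncurry Sym2.mk)).toFinset, sym2Dist p ν e :=
      Finset.sum_le_sum_of_subset_of_nonneg hsub fun e _ _ => sym2Dist_nonneg p ν e
    _ ≤ ((D.map (Function.uncurry Sym2.mk)).map (sym2Dist p ν)).sum :=
      Multiset.sum_toFinset_le_sum_map _ fun e _ => sym2Dist_nonneg p ν e
    _ = policyCost p ν D := by rw [Multiset.map_map]; rfl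

end Energy

section MinimumSpanningTree

variable {ι : Type} [Fintype ι] {p : ι → EuclideanSpace ℝ (Fin 2)} {ν : ℝ} {T : SimpleGraph ι}

lemma graphEnergy_le_of_connected
    (hmin : ∀ T' : SimpleGraph ι, T'.IsTree → graphEnergy p ν T ≤ graphEnergy p ν T')
    {G : SimpleGraph ι} (hG : G.Connected) : graphEnergy p ν T ≤ graphEnergy p ν G := by
  obtain ⟨T', hle, hT'⟩ := hG.exists_isTree_le
  exact (hmin T' hT').trans (graphEnergy_mono p ν hle)

lemma graphEnergy_le_optEnergy
    (hmin : ∀ T' : SimpleGraph ι, T'.IsTree → graphEnergy p ν T ≤ graphEnergy p ν T')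
    (hT : T.Connected) : graphEnergy p ν T ≤ optEnergy p ν := by
  have : Nonempty ι := hT.nonempty
  have hcomplete : (policyGraph (Finset.univ : Finset (ι × ι)).val).Connected := by
    rw [show policyGraph (Finset.univ : Finset (ι × ι)).val = ⊤ by ext; simp [policyGraph]]
    exact connected_top
  refine le_csInf ⟨_, _, hcomplete, rfl⟩ ?_
  rintro c ⟨D, hD, rfl⟩
  exact (graphEnergy_le_of_connected hmin hD).trans (graphEnergy_policyGraph_le_policyCost p ν D)

lemma adj_of_forall_sym2Dist_lt
    (hmin : ∀ T' : SimpleGraph ι, T'.IsTree → graphEnergy p ν T ≤ graphEnergy p ν T')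
    (hT : T.Connected) {i j : ι} (hij : i ≠ j)
    (hlt : ∀ l, l ≠ i → l ≠ j → sym2Dist p ν s(i, j) < sym2Dist p ν s(i, l)) : T.Adj i j := by
  by_contra hnij
  obtain ⟨P, hP⟩ := hT.exists_isPath i j
  cases P with
  | nil => exact hij rfl
  | @cons _ x _ hix q =>
    rw [Walk.cons_isPath_iff] at hP
    have hxj : x ≠ j := by rintro rfl; exact hnij hix
    have hq : s(i, x) ∉ q.edges := fun h => hP.2 (q.fst_mem_support_of_mem_edges h)
    have hconn : ((T ⊔ edge i j).deleteEdges {s(i, x)}).Connected := by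
      refine (hT.mono le_sup_left).connected_delete_edge_of_not_isBridge ?_
      -- `i → j ⇝ x` avoids `s(i, x)`, so that edge is not a bridge
      rw [isBridge_iff, not_not, reachable_deleteEdges_iff_exists_walk]
      refine ⟨Walk.cons (Or.inr ((edge_adj i j i j).mpr ⟨Or.inl ⟨rfl, rfl⟩, hij⟩))
        (q.reverse.mapLe le_sup_left), ?_⟩
      simp [hq, hxj, hij]
    have hswap := graphEnergy_le_of_connected hmin hconn
    rw [graphEnergy_sup_edge_deleteEdges p ν hij hnij hix] at hswap
    linarith [hlt x hix.ne' hxj]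

lemma nng_le
    (hgen : ∀ i j k l : ι, i ≠ j → k ≠ l →
      dist (p i) (p j) = dist (p k) (p l) → (s(i, j) : Sym2 ι) = s(k, l))
    (hν : 0 < ν)
    (hmin : ∀ T' : SimpleGraph ι, T'.IsTree → graphEnergy p ν T ≤ graphEnergy p ν T')
    (hT : T.Connected) : nng p ≤ T := by
  have hnearest : ∀ i j, i ≠ j → (∀ l, l ≠ i → dist (p i) (p j) ≤ dist (p i) (p l)) →
      T.Adj i j := by
    intro i j hij hnn
    refine adj_of_forall_sym2Dist_lt hmin hT hij fun l hli hlj => ?_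
    have hlt : dist (p i) (p j) < dist (p i) (p l) :=
      (hnn l hli).lt_of_ne fun h => hlj (Sym2.congr_right.mp (hgen i j i l hij hli.symm h)).symm
    exact Real.rpow_lt_rpow dist_nonneg hlt hν
  rintro a b ⟨hab, h | h⟩
  · exact hnearest a b hab h
  · exact (hnearest b a hab.symm h).symm

end MinimumSpanningTree

theorem stmt5_general {ι : Type} [Fintype ι]
    (p : ι → EuclideanSpace ℝ (Fin 2))
    (hgen : ∀ i j k l : ι, i ≠ j → k ≠ l →
      dist (p i) (p j) = dist (p k) (p l) → (s(i, j) : Sym2 ι) = s(k, l))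
    (ν : ℝ) (hν : 0 < ν)
    (T : SimpleGraph ι) (hT : T.IsTree)
    (hmin : ∀ T' : SimpleGraph ι, T'.IsTree → graphEnergy p ν T ≤ graphEnergy p ν T') :
    graphEnergy p ν (nng p) + graphEnergy p ν T ≤ 2 * optEnergy p ν := by
  have hnng : graphEnergy p ν (nng p) ≤ graphEnergy p ν T :=
    graphEnergy_mono p ν (nng_le hgen hν hmin hT.connected)
  have hopt : graphEnergy p ν T ≤ optEnergy p ν := graphEnergy_le_optEnergy hmin hT.connected
  linarith

/-- DFMRF is a 2-approximation under 1-nearest-neighbor dependency: for points in general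
position, the DFMRF energy (1-NNG forwarding energy plus MST aggregation energy) is at
most twice the optimal lossless fusion energy. -/
theorem stmt5 {ι : Type} [Fintype ι] [Nonempty ι]
    (p : ι → EuclideanSpace ℝ (Fin 2)) (hp : Function.Injective p)
    (hgen : ∀ i j k l : ι, i ≠ j → k ≠ l →
      dist (p i) (p j) = dist (p k) (p l) → (s(i, j) : Sym2 ι) = s(k, l))
    (ν : ℝ) (hν : 0 < ν)
    (T : SimpleGraph ι) (hT : T.IsTree)
    (hmin : ∀ T' : SimpleGraph ι, T'.IsTree → graphEnergy p ν T ≤ graphEnergy p ν T') :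
    graphEnergy p ν (nng p) + graphEnergy p ν T ≤ 2 * optEnergy p ν :=
  stmt5_general p hgen ν hν T hT hmin
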